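/- If x(u), p_1(u) solve dx/du = p_1 x^3(x-1)/(x+1)^2, dp_1/du = p_1^2 x^2(3-2x)/(x+1)^3 - 2p_0^2(x+1)^4/(x^3(x-1)) and (ξ_1,ξ_2) solve the linear system dξ_1/du = (x^3/(1+x)^3) ξ_2, dξ_2/du = 3 p_1^2 (x(x-1)/(x+1)^2) ξ_1, then (ξ_1,ξ_2) coincide with the (y,p_2)-components of the variational equations of the full Hamiltonian system (in rescaled time u) along the solution (x(u), p_1(u), y=0, p_2=0, p_3=0); i.e., the variational equations decouple with this 2×2 block. -/

import Mathlib

/-- The Zipoy-Voorhees Hamiltonian as a function on the 8-dimensional phase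
space `z = (t, x, y, φ, p₀, p₁, p₂, p₃)`. -/
noncomputable def H8 (z : Fin 8 → ℝ) : ℝ :=
  -((z 1 + 1) ^ 2 / (2 * (z 1 - 1) ^ 2)) * (z 4) ^ 2
  + (((z 1) ^ 2 - (z 2) ^ 2) ^ 3 / (2 * (z 1 - 1) * (z 1 + 1) ^ 5)) * (z 5) ^ 2
  + (((z 1) ^ 2 - (z 2) ^ 2) ^ 3 * (1 - (z 2) ^ 2)
      / (2 * (z 1 - 1) ^ 2 * (z 1 + 1) ^ 6)) * (z 6) ^ 2
  + ((z 1 - 1) / (2 * (z 1 + 1) ^ 3 * (1 - (z 2) ^ 2))) * (z 7) ^ 2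

/-- Partial derivative of a function on phase space in the `i`-th direction. -/
noncomputable def pd (F : (Fin 8 → ℝ) → ℝ) (i : Fin 8) (z : Fin 8 → ℝ) : ℝ :=
  deriv (fun s => F (Function.update z i s)) (z i)

/-- The time-rescaling factor `dτ/du = (x-1)²(x+1)³/x³`. -/
noncomputable def rescale (z : Fin 8 → ℝ) : ℝ :=
  (z 1 - 1) ^ 2 * (z 1 + 1) ^ 3 / (z 1) ^ 3

/-- The Hamiltonian vector field of `H8` in the rescaled time `u`
(`dτ = ((x-1)²(x+1)³/x³) du`): `dq_i/du = ρ ∂H/∂p_i`, `dp_i/du = -ρ ∂H/∂q_i`. -/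
noncomputable def Vfield (z : Fin 8 → ℝ) : Fin 8 → ℝ := fun i =>
  if (i : ℕ) < 4 then rescale z * pd H8 (i + 4) z
  else -(rescale z * pd H8 (i - 4) z)

/-! `H8` depends on `y` only through `y²`, so `∂H/∂y` vanishes wherever `y = 0`, and `H8` is
quadratic in `p₂` with a coefficient depending on `(x, y)` alone, so `∂H/∂p₂` vanishes wherever
`p₂ = 0`. Hence on `{y = p₂ = 0}` the rows of the Jacobian belonging to `y` and `p₂` vanish except
in the directions `p₂` and `y` respectively, where the entries are computed explicitly; for the
second one `p₂ = p₃ = 0` reduces `H8` on the `y`-line to `c₀ + c₁ (x² - y²)³`. -/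

open Function

-- No differentiability is needed: `deriv_comp_neg` holds unconditionally.
lemma Function.Even.deriv_zero {𝕜 F : Type*} [NontriviallyNormedField 𝕜] [CharZero 𝕜]
    [NormedAddCommGroup F] [NormedSpace 𝕜 F] {f : 𝕜 → F} (hf : f.Even) : deriv f 0 = 0 := by
  have h := deriv_comp_neg f (0 : 𝕜)
  rw [funext hf, neg_zero, eq_neg_iff_add_eq_zero, ← two_smul 𝕜] at h
  simpa using h

section PartialDerivative

variable {F : (Fin 8 → ℝ) → ℝ} {i : Fin 8} {z : Fin 8 → ℝ}

lemma pd_update_self (s : ℝ) : pd F i (update z i s) = deriv (fun t => F (update z i t)) s := by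
  simp only [pd, update_idem, update_self]

lemma pd_eq_zero_of_update_eq_zero (h : ∀ s, F (update z i s) = 0) : pd F i z = 0 := by
  simp only [pd, h, deriv_const']

lemma pd_eq_zero_of_even (hz : z i = 0) (heven : (fun s => F (update z i s)).Even) :
    pd F i z = 0 := by
  rw [pd, hz, heven.deriv_zero]

end PartialDerivative

lemma H8_update_two_even (w : Fin 8 → ℝ) : (fun s => H8 (update w 2 s)).Even := by
  intro s
  simp [H8]

lemma pd_H8_two_eq_zero {w : Fin 8 → ℝ} (hy : w 2 = 0) : pd H8 2 w = 0 :=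
  pd_eq_zero_of_even hy (H8_update_two_even w)

lemma hasDerivAt_H8_update_two {z : Fin 8 → ℝ} (hp2 : z 6 = 0) (hp3 : z 7 = 0) (s : ℝ) :
    HasDerivAt (fun t => H8 (update z 2 t))
      (-6 * ((z 5) ^ 2 / (2 * (z 1 - 1) * (z 1 + 1) ^ 5)) * (s * ((z 1) ^ 2 - s ^ 2) ^ 2)) s := by
  set c₁ := (z 5) ^ 2 / (2 * (z 1 - 1) * (z 1 + 1) ^ 5)
  have hline : (fun t => H8 (update z 2 t)) = fun t =>
      -((z 1 + 1) ^ 2 / (2 * (z 1 - 1) ^ 2)) * (z 4) ^ 2 + c₁ * ((z 1) ^ 2 - t ^ 2) ^ 3 := by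
    funext t
    simp only [H8, ne_eq, Fin.reduceEq, not_false_eq_true, update_of_ne, update_self, hp2, hp3]
    ring
  rw [hline]
  refine ((((hasDerivAt_pow 2 s).const_sub ((z 1) ^ 2)).pow 3).const_mul c₁).const_add _
    |>.congr_deriv ?_
  push_cast
  ring

noncomputable def coeffP2 (w : Fin 8 → ℝ) : ℝ :=
  ((w 1) ^ 2 - (w 2) ^ 2) ^ 3 * (1 - (w 2) ^ 2) / (2 * (w 1 - 1) ^ 2 * (w 1 + 1) ^ 6)

lemma pd_H8_six (w : Fin 8 → ℝ) : pd H8 6 w = 2 * coeffP2 w * w 6 := by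
  have hline : (fun s => H8 (update w 6 s)) =
      fun s => H8 (update w 6 0) + coeffP2 w * s ^ 2 := by
    funext s
    simp only [H8, coeffP2, ne_eq, Fin.reduceEq, not_false_eq_true, update_of_ne, update_self]
    ring
  have h := ((hasDerivAt_pow 2 (w 6)).const_mul (coeffP2 w)).const_add (H8 (update w 6 0))
  rw [pd, hline, h.deriv]
  ring

lemma Vfield_two (w : Fin 8 → ℝ) : Vfield w 2 = rescale w * (2 * coeffP2 w * w 6) := by
  rw [← pd_H8_six]
  rfl

lemma Vfield_six (w : Fin 8 → ℝ) : Vfield w 6 = -(rescale w * pd H8 2 w) := rfl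

lemma Vfield_update_two_six {z : Fin 8 → ℝ} (hp2 : z 6 = 0) (hp3 : z 7 = 0) (s : ℝ) :
    Vfield (update z 2 s) 6 = 6 * rescale z * ((z 5) ^ 2 / (2 * (z 1 - 1) * (z 1 + 1) ^ 5))
      * (s * ((z 1) ^ 2 - s ^ 2) ^ 2) := by
  rw [Vfield_six, pd_update_self, (hasDerivAt_H8_update_two hp2 hp3 s).deriv]
  simp only [rescale, ne_eq, Fin.reduceEq, not_false_eq_true, update_of_ne]
  ring

lemma pd_Vfield_two {z : Fin 8 → ℝ} (hx : 1 < z 1) (hy : z 2 = 0) (hp2 : z 6 = 0) (j : Fin 8) :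
    pd (fun w => Vfield w 2) j z = if j = 6 then (z 1) ^ 3 / (1 + z 1) ^ 3 else 0 := by
  split_ifs with hj
  · subst hj
    have hline : (fun s => Vfield (update z 6 s) 2) =
        fun s => rescale z * (2 * coeffP2 z) * s := by
      funext s
      simp only [Vfield_two, rescale, coeffP2, ne_eq, Fin.reduceEq, not_false_eq_true,
        update_of_ne, update_self]
      ring
    rw [pd, hline, ((hasDerivAt_id' (z 6)).const_mul _).deriv]
    have hx₀ : z 1 ≠ 0 := by linarith
    have hx₁ : z 1 - 1 ≠ 0 := by linarith
    have hx₂ : 1 + z 1 ≠ 0 := by linarith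
    simp only [rescale, coeffP2, hy]
    field_simp
    ring
  · exact pd_eq_zero_of_update_eq_zero fun s => by
      simp [Vfield_two, update_of_ne (Ne.symm hj), hp2]

lemma pd_Vfield_six {z : Fin 8 → ℝ} (hy : z 2 = 0) (hp2 : z 6 = 0) (hp3 : z 7 = 0) (j : Fin 8) :
    pd (fun w => Vfield w 6) j z =
      if j = 2 then 3 * (z 5) ^ 2 * ((z 1) * (z 1 - 1) / (z 1 + 1) ^ 2) else 0 := by
  split_ifs with hj
  · subst hj
    have hcubic : HasDerivAt (fun s : ℝ => s * ((z 1) ^ 2 - s ^ 2) ^ 2) ((z 1) ^ 4) 0 := by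
      refine (hasDerivAt_id' (0 : ℝ)).mul
        (((hasDerivAt_pow 2 (0 : ℝ)).const_sub ((z 1) ^ 2)).pow 2) |>.congr_deriv ?_
      simp only [Pi.pow_apply]
      ring
    rw [pd, funext (Vfield_update_two_six hp2 hp3), hy, (hcubic.const_mul _).deriv]
    simp only [rescale]
    field_simp
    ring
  · exact pd_eq_zero_of_update_eq_zero fun s => by
      rw [Vfield_six, pd_H8_two_eq_zero (by rwa [update_of_ne (Ne.symm hj)]), mul_zero, neg_zero]

/-- Along a solution lying in `{y = 0, p₂ = 0, p₃ = 0}` (indices `2, 6, 7`),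
the variational equations of the rescaled Zipoy-Voorhees system decouple:
the rows of the Jacobian `A(u)` of the vector field corresponding to the
variations `(ξ₁, ξ₂)` of `(y, p₂)` vanish except for the entries
`A_{y,p₂} = x³/(1+x)³` and `A_{p₂,y} = 3 p₁² x(x-1)/(x+1)²`.  Hence any
solution of `dξ₁/du = (x³/(1+x)³) ξ₂`, `dξ₂/du = 3 p₁² (x(x-1)/(x+1)²) ξ₁`
coincides with the `(y,p₂)`-components of the variational equations. -/
theorem stmt6 (z : Fin 8 → ℝ) (hx : 1 < z 1)
    (hy : z 2 = 0) (hp2 : z 6 = 0) (hp3 : z 7 = 0) :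
    (∀ j : Fin 8, pd (fun w => Vfield w 2) j z =
      if j = 6 then (z 1) ^ 3 / (1 + z 1) ^ 3 else 0) ∧
    (∀ j : Fin 8, pd (fun w => Vfield w 6) j z =
      if j = 2 then 3 * (z 5) ^ 2 * ((z 1) * (z 1 - 1) / (z 1 + 1) ^ 2) else 0) :=
  ⟨pd_Vfield_two hx hy hp2, pd_Vfield_six hy hp2 hp3⟩
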